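/- Let M and N be finite matroids on disjoint ground sets, and let P be a matroid on E(M) ∪ E(N) whose collection of cyclic flats is exactly Z and whose ranks on Z are as in the free product construction, namely: Z consists of the cyclic flats X ≠ E(M) of M (with rank r_M(X)) together with the sets E(M) ∪ Y for nonempty cyclic flats Y of N (with rank r_M(E(M)) + r_N(Y)), together with E(M) itself (with rank r_M(E(M))) when M has no coloops and N has no loops. Then a set I ⊆ E(M) ∪ E(N) is independent in P if and only if I ∩ E(M) is independent in M and |I ∩ E(N)| − r_N(I ∩ E(N)) ≤ r_M(E(M)) − |I ∩ E(M)|. -/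

import Mathlib

namespace Matroid

variable {α β : Type*}

/-- A circuit of a matroid: a minimal dependent set. -/
def IsCircuit' (M : Matroid α) (C : Set α) : Prop :=
  M.Dep C ∧ ∀ D, D ⊂ C → M.Indep D

/-- A cyclic flat: a flat that is a (possibly empty) union of circuits. -/
def CyclicFlat (M : Matroid α) (X : Set α) : Prop :=
  M.IsFlat X ∧ ∀ e ∈ X, ∃ C, M.IsCircuit' C ∧ C ⊆ X ∧ e ∈ C

/-- The rank of a set: the maximum size of an independent subset. -/
noncomputable def rk (M : Matroid α) (X : Set α) : ℕ :=
  sSup {n | ∃ I, M.Indep I ∧ I ⊆ X ∧ I.ncard = n}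

/-- Deletion of a set from a matroid. -/
def del (M : Matroid α) (D : Set α) : Matroid α := M ↾ (M.E \ D)

/-- Contraction of a set in a matroid. -/
def con (M : Matroid α) (C : Set α) : Matroid α := (M✶ ↾ (M.E \ C))✶

/-- `N` is a minor of `M` if it is obtained from `M` by a contraction and a deletion. -/
def IsMinorOf (N M : Matroid α) : Prop := ∃ C D, N = (M.con C).del D

/-- Matroid isomorphism: a bijection of ground sets preserving independence. -/
def IsIsoTo (M : Matroid α) (N : Matroid β) : Prop :=
  ∃ e : M.E ≃ N.E, ∀ I : Set M.E,
    M.Indep (Subtype.val '' I) ↔ N.Indep (Subtype.val '' (e '' I))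

end Matroid

/-!
A finite matroid is determined by its cyclic flats and their ranks: `I` is independent iff
`|I ∩ Z| ≤ r(Z)` for every cyclic flat `Z`, because the nullity of any set `X` is already witnessed
by one cyclic flat, the union of the circuits in the closure of `X`. For `P` the cyclic flats inside
`E(M)` give exactly the independence of `I ∩ E(M)` in `M` (when `E(M)` is cyclic in `M` but not in
`P`, `N` has loops and `E(M) ∪ loops(N)` takes its place), and the cyclic flats `E(M) ∪ Y` give
exactly `ν_N(I ∩ E(N)) ≤ r(M) - |I ∩ E(M)|`.
-/

lemma Set.ncard_inter_union_of_disjoint {α : Type*} {I S T : Set α} (hST : Disjoint S T)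
    (hI : I.Finite) : (I ∩ (S ∪ T)).ncard = (I ∩ S).ncard + (I ∩ T).ncard := by
  rw [Set.inter_union_distrib_left, Set.ncard_union_eq
    (hST.mono Set.inter_subset_right Set.inter_subset_right) (hI.inter_of_left S)
    (hI.inter_of_left T)]

namespace Matroid

open Set

variable {α : Type*} {M : Matroid α} {C I J X Y F : Set α} {e : α}

lemma isCircuit'_iff : M.IsCircuit' C ↔ M.IsCircuit C :=
  isCircuit_iff_forall_ssubset.symm

lemma cyclicFlat_iff :
    M.CyclicFlat X ↔ M.IsFlat X ∧ ∀ e ∈ X, ∃ C, M.IsCircuit C ∧ C ⊆ X ∧ e ∈ C := by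
  simp only [CyclicFlat, isCircuit'_iff]

lemma CyclicFlat.subset_ground (hX : M.CyclicFlat X) : X ⊆ M.E :=
  hX.1.subset_ground

lemma CyclicFlat.exists_isBase_notMem (hX : M.CyclicFlat X) (he : e ∈ X) :
    ∃ B, M.IsBase B ∧ e ∉ B := by
  obtain ⟨C, hC, -, heC⟩ := (cyclicFlat_iff.1 hX).2 e he
  have hnc := hC.not_isColoop_of_mem heC
  rw [isColoop_iff_forall_mem_isBase] at hnc
  push Not at hnc
  exact hnc

lemma cyclicFlat_loops (M : Matroid α) : M.CyclicFlat M.loops :=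
  cyclicFlat_iff.2 ⟨M.isFlat_closure ∅, fun e he =>
    ⟨{e}, IsLoop.isCircuit he, singleton_subset_iff.2 he, rfl⟩⟩

def cyclicPart (M : Matroid α) (X : Set α) : Set α :=
  {e | ∃ C, M.IsCircuit C ∧ C ⊆ X ∧ e ∈ C}

lemma cyclicPart_subset : M.cyclicPart X ⊆ X :=
  fun _ ⟨_, _, hCX, heC⟩ => hCX heC

lemma IsCircuit.subset_cyclicPart (hC : M.IsCircuit C) (hCX : C ⊆ X) : C ⊆ M.cyclicPart X :=
  fun _ heC => ⟨C, hC, hCX, heC⟩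

lemma IsFlat.cyclicFlat_cyclicPart (hF : M.IsFlat F) : M.CyclicFlat (M.cyclicPart F) := by
  refine cyclicFlat_iff.2 ⟨isFlat_iff_closure_eq.2 (subset_antisymm ?_ ?_), ?_⟩
  · intro x hx
    by_contra hxZ
    obtain ⟨C, hCx, hC, hxC⟩ := exists_isCircuit_of_mem_closure hx hxZ
    have hxF : x ∈ F := hF.closure ▸ M.closure_subset_closure cyclicPart_subset hx
    exact hxZ ⟨C, hC, hCx.trans (insert_subset hxF cyclicPart_subset), hxC⟩
  · exact M.subset_closure _ (cyclicPart_subset.trans hF.subset_ground)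
  · rintro e ⟨C, hC, hCF, heC⟩
    exact ⟨C, hC, hC.subset_cyclicPart hCF, heC⟩

noncomputable def nullity (M : Matroid α) (X : Set α) : ℤ := X.ncard - M.rk X

section Finite

variable [M.Finite]

lemma IsBasis'.rk_eq_ncard (hJ : M.IsBasis' J X) : M.rk X = J.ncard := by
  refine IsGreatest.csSup_eq ⟨⟨J, hJ.indep, hJ.subset, rfl⟩, ?_⟩
  rintro _ ⟨I, hI, hIX, rfl⟩
  have hle := hI.encard_le_eRk_of_subset hIX
  rw [← hJ.encard_eq_eRk, ← (M.set_finite I hI.subset_ground).cast_ncard_eq,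
    ← (M.set_finite J hJ.indep.subset_ground).cast_ncard_eq] at hle
  exact_mod_cast hle

lemma cast_rk_eq_eRk (X : Set α) : (M.rk X : ℕ∞) = M.eRk X := by
  obtain ⟨J, hJ⟩ := M.exists_isBasis' X
  rw [hJ.rk_eq_ncard, (M.set_finite J hJ.indep.subset_ground).cast_ncard_eq, hJ.encard_eq_eRk]

lemma rk_le_of_subset_closure (h : X ⊆ M.closure Y) : M.rk X ≤ M.rk Y := by
  have hle := (M.eRk_mono h).trans (M.eRk_closure_eq Y).le
  rwa [← cast_rk_eq_eRk, ← cast_rk_eq_eRk, Nat.cast_le] at hle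

lemma rk_mono (h : X ⊆ Y) : M.rk X ≤ M.rk Y := by
  have hle := M.eRk_mono h
  rwa [← cast_rk_eq_eRk, ← cast_rk_eq_eRk, Nat.cast_le] at hle

lemma rk_le_ncard (hX : X.Finite) : M.rk X ≤ X.ncard := by
  have hle := M.eRk_le_encard X
  rwa [← cast_rk_eq_eRk, ← hX.cast_ncard_eq, Nat.cast_le] at hle

lemma rk_loops : M.rk M.loops = 0 := by
  exact_mod_cast (cast_rk_eq_eRk M.loops).trans M.eRk_loops

lemma Indep.ncard_le_rk (hI : M.Indep I) (hIX : I ⊆ X) : I.ncard ≤ M.rk X := by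
  have hle := hI.encard_le_eRk_of_subset hIX
  rwa [← cast_rk_eq_eRk, ← (M.set_finite I hI.subset_ground).cast_ncard_eq, Nat.cast_le] at hle

lemma Indep.ncard_inter_le_rk (hI : M.Indep I) (X : Set α) : (I ∩ X).ncard ≤ M.rk X :=
  (hI.subset inter_subset_left).ncard_le_rk inter_subset_right

lemma indep_of_ncard_le_rk (hI : I.Finite) (h : I.ncard ≤ M.rk I) : M.Indep I := by
  rw [indep_iff_eRk_eq_encard_of_finite hI, ← cast_rk_eq_eRk, ← hI.cast_ncard_eq]
  exact_mod_cast le_antisymm (rk_le_ncard hI) h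

lemma nullity_mono (hXY : X ⊆ Y) (hY : Y.Finite) : M.nullity X ≤ M.nullity Y := by
  have hle := M.eRk_union_le_eRk_add_encard X (Y \ X)
  rw [union_sdiff_cancel hXY, ← cast_rk_eq_eRk, ← cast_rk_eq_eRk, ← hY.sdiff.cast_ncard_eq] at hle
  have hrk : M.rk Y ≤ M.rk X + (Y \ X).ncard := by exact_mod_cast hle
  have hcard := ncard_sdiff_add_ncard_of_subset hXY hY
  rw [nullity, nullity]
  omega

/-- Take `Z` to be the union of the circuits in the closure of `X`. For a basis `J` of `X`, the
fundamental circuits of the elements of `X \ J` lie in `Z`, and `J ∩ Z` spans `Z`. -/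
lemma exists_cyclicFlat_nullity_le (hX : X ⊆ M.E) :
    ∃ Z, M.CyclicFlat Z ∧ M.nullity X ≤ (X ∩ Z).ncard - M.rk Z := by
  obtain ⟨J, hJ⟩ := M.exists_isBasis X hX
  set Z := M.cyclicPart (M.closure X)
  have hfund : ∀ z ∈ M.closure X, z ∉ J →
      ∃ C, M.IsCircuit C ∧ C ⊆ insert z J ∧ z ∈ C ∧ C ⊆ Z := by
    intro z hz hzJ
    obtain ⟨C, hCJ, hC, hzC⟩ := exists_isCircuit_of_mem_closure (hJ.closure_eq_closure ▸ hz) hzJ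
    exact ⟨C, hC, hCJ, hzC, hC.subset_cyclicPart
      (hCJ.trans (insert_subset hz (hJ.subset.trans (M.subset_closure X hX))))⟩
  have hXJ : X \ J ⊆ Z := by
    intro d hd
    obtain ⟨C, -, -, hdC, hCZ⟩ := hfund d (M.subset_closure X hX hd.1) hd.2
    exact hCZ hdC
  have hZJ : Z ⊆ M.closure (J ∩ Z) := by
    intro z hz
    by_cases hzJ : z ∈ J
    · exact M.subset_closure _ (inter_subset_left.trans hJ.indep.subset_ground) ⟨hzJ, hz⟩
    obtain ⟨C, hC, hCJ, hzC, hCZ⟩ := hfund z (cyclicPart_subset hz) hzJ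
    exact M.closure_subset_closure (subset_inter (sdiff_singleton_subset_iff.2 hCJ)
      (sdiff_subset.trans hCZ)) (hC.mem_closure_sdiff_singleton_of_mem hzC)
  refine ⟨Z, (M.isFlat_closure X).cyclicFlat_cyclicPart, ?_⟩
  have hXfin : X.Finite := M.set_finite X hX
  have hrkZ : M.rk Z ≤ (J ∩ Z).ncard := (rk_le_of_subset_closure hZJ).trans
    (rk_le_ncard (hXfin.subset (inter_subset_left.trans hJ.subset)))
  have hcardZ : (X \ J).ncard + (J ∩ Z).ncard ≤ (X ∩ Z).ncard := by
    rw [← ncard_union_eq (disjoint_sdiff_left.mono_right inter_subset_left) hXfin.sdiff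
      (hXfin.subset (inter_subset_left.trans hJ.subset))]
    exact ncard_le_ncard (union_subset (subset_inter sdiff_subset hXJ)
      (inter_subset_inter_left Z hJ.subset)) (hXfin.inter_of_left Z)
  have hcardX := ncard_sdiff_add_ncard_of_subset hJ.subset hXfin
  rw [nullity, hJ.isBasis'.rk_eq_ncard]
  omega

lemma indep_iff_forall_cyclicFlat (hI : I ⊆ M.E) :
    M.Indep I ↔ ∀ Z, M.CyclicFlat Z → (I ∩ Z).ncard ≤ M.rk Z := by
  refine ⟨fun hI Z _ => hI.ncard_inter_le_rk Z, fun h => ?_⟩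
  obtain ⟨Z, hZ, hle⟩ := exists_cyclicFlat_nullity_le hI
  have := h Z hZ
  refine indep_of_ncard_le_rk (M.set_finite I hI) ?_
  rw [nullity] at hle
  omega

end Finite

section FreeProduct

variable {N P : Matroid α}

lemma freeProduct_indep_inter_ground [M.Finite] [N.Finite] [P.Finite]
    (hr1 : ∀ X : Set α, M.CyclicFlat X → X ≠ M.E → P.rk X = M.rk X)
    (hr2 : ((∀ e ∈ M.E, ∃ B, M.IsBase B ∧ e ∉ B) ∧ (∀ e ∈ N.E, ∃ B, N.IsBase B ∧ e ∈ B)) →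
      P.rk M.E = M.rk M.E)
    (hr3 : ∀ Y : Set α, N.CyclicFlat Y → Y ≠ ∅ → P.rk (M.E ∪ Y) = M.rk M.E + N.rk Y)
    (hI : P.Indep I) : M.Indep (I ∩ M.E) := by
  refine (indep_iff_forall_cyclicFlat inter_subset_right).2 fun X hX => ?_
  rw [inter_assoc, inter_eq_right.2 hX.subset_ground]
  obtain hXE | rfl := ne_or_eq X M.E
  · exact hr1 X hX hXE ▸ hI.ncard_inter_le_rk X
  by_cases hN : ∀ e ∈ N.E, ∃ B, N.IsBase B ∧ e ∈ B
  · exact hr2 ⟨fun e he => hX.exists_isBase_notMem he, hN⟩ ▸ hI.ncard_inter_le_rk M.E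
  push Not at hN
  obtain ⟨e, heN, he⟩ := hN
  have hloop : N.IsLoop e := (isLoop_iff_forall_notMem_isBase heN).2 he
  have hrk := hr3 N.loops N.cyclicFlat_loops (nonempty_iff_ne_empty.1 ⟨e, hloop⟩)
  rw [rk_loops, add_zero] at hrk
  exact (ncard_le_ncard (inter_subset_inter_right I subset_union_left)
    ((P.set_finite I hI.subset_ground).inter_of_left _)).trans (hrk ▸ hI.ncard_inter_le_rk _)

lemma freeProduct_nullity_le [N.Finite] [P.Finite] (hdisj : Disjoint M.E N.E)
    (hr3 : ∀ Y : Set α, N.CyclicFlat Y → Y ≠ ∅ → P.rk (M.E ∪ Y) = M.rk M.E + N.rk Y)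
    (hI : P.Indep I) (hA : (I ∩ M.E).ncard ≤ M.rk M.E) :
    N.nullity (I ∩ N.E) ≤ M.rk M.E - (I ∩ M.E).ncard := by
  obtain ⟨Z, hZ, hle⟩ := N.exists_cyclicFlat_nullity_le (inter_subset_right : I ∩ N.E ⊆ N.E)
  obtain rfl | hZne := eq_or_ne Z ∅
  · simp only [inter_empty, ncard_empty, Nat.cast_zero, zero_sub] at hle
    omega
  have hrk := hI.ncard_inter_le_rk (M.E ∪ Z)
  rw [hr3 Z hZ hZne, ncard_inter_union_of_disjoint (hdisj.mono_right hZ.subset_ground)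
    (P.set_finite I hI.subset_ground)] at hrk
  rw [inter_assoc, inter_eq_right.2 hZ.subset_ground] at hle
  omega

lemma freeProduct_indep_of_nullity_le [M.Finite] [N.Finite] [P.Finite]
    (hdisj : Disjoint M.E N.E)
    (hZ : {X : Set α | P.CyclicFlat X} =
      ({X : Set α | M.CyclicFlat X ∧ X ≠ M.E} ∪
        {W : Set α | ∃ Y : Set α, N.CyclicFlat Y ∧ Y ≠ ∅ ∧ W = M.E ∪ Y}) ∪
      {W : Set α | W = M.E ∧ (∀ e ∈ M.E, ∃ B, M.IsBase B ∧ e ∉ B) ∧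
        (∀ e ∈ N.E, ∃ B, N.IsBase B ∧ e ∈ B)})
    (hr1 : ∀ X : Set α, M.CyclicFlat X → X ≠ M.E → P.rk X = M.rk X)
    (hr2 : ((∀ e ∈ M.E, ∃ B, M.IsBase B ∧ e ∉ B) ∧ (∀ e ∈ N.E, ∃ B, N.IsBase B ∧ e ∈ B)) →
      P.rk M.E = M.rk M.E)
    (hr3 : ∀ Y : Set α, N.CyclicFlat Y → Y ≠ ∅ → P.rk (M.E ∪ Y) = M.rk M.E + N.rk Y)
    (hIE : I ⊆ P.E) (hA : M.Indep (I ∩ M.E))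
    (hν : N.nullity (I ∩ N.E) ≤ M.rk M.E - (I ∩ M.E).ncard) : P.Indep I := by
  refine (indep_iff_forall_cyclicFlat hIE).2 fun Z hZP => ?_
  have hmem : Z ∈ {X : Set α | P.CyclicFlat X} := hZP
  rw [hZ] at hmem
  rcases hmem with (⟨hX, hXE⟩ | ⟨Y, hY, hYne, rfl⟩) | ⟨rfl, hM, hN⟩
  · have hle := hA.ncard_inter_le_rk Z
    rwa [inter_assoc, inter_eq_right.2 hX.subset_ground, ← hr1 Z hX hXE] at hle
  · have hIfin : I.Finite := P.set_finite I hIE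
    rw [hr3 Y hY hYne, ncard_inter_union_of_disjoint (hdisj.mono_right hY.subset_ground) hIfin]
    have hνY := N.nullity_mono (inter_subset_inter_right I hY.subset_ground) (hIfin.inter_of_left _)
    have hrkY := N.rk_mono (inter_subset_right : I ∩ Y ⊆ Y)
    rw [nullity] at hνY
    omega
  · exact hr2 ⟨hM, hN⟩ ▸ hA.ncard_le_rk inter_subset_right

end FreeProduct

end Matroid

/-- Independent sets of the free product: if `P` is a matroid on `E(M) ∪ E(N)` whose cyclic
flats and their ranks are as in the free product construction, then `I ⊆ E(M) ∪ E(N)` is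
independent in `P` iff `I ∩ E(M)` is independent in `M` and
`ν_N (I ∩ E(N)) ≤ r M - |I ∩ E(M)|`. -/
theorem free_product_indep {α : Type*} (M N : Matroid α) [M.Finite] [N.Finite]
    (hdisj : Disjoint M.E N.E) (P : Matroid α) (hPE : P.E = M.E ∪ N.E)
    (hZ : {X : Set α | P.CyclicFlat X} =
      ({X : Set α | M.CyclicFlat X ∧ X ≠ M.E} ∪
        {W : Set α | ∃ Y : Set α, N.CyclicFlat Y ∧ Y ≠ ∅ ∧ W = M.E ∪ Y}) ∪
      {W : Set α | W = M.E ∧ (∀ e ∈ M.E, ∃ B, M.IsBase B ∧ e ∉ B) ∧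
        (∀ e ∈ N.E, ∃ B, N.IsBase B ∧ e ∈ B)})
    (hr1 : ∀ X : Set α, M.CyclicFlat X → X ≠ M.E → P.rk X = M.rk X)
    (hr2 : ((∀ e ∈ M.E, ∃ B, M.IsBase B ∧ e ∉ B) ∧ (∀ e ∈ N.E, ∃ B, N.IsBase B ∧ e ∈ B)) →
      P.rk M.E = M.rk M.E)
    (hr3 : ∀ Y : Set α, N.CyclicFlat Y → Y ≠ ∅ → P.rk (M.E ∪ Y) = M.rk M.E + N.rk Y) :
    ∀ I ⊆ M.E ∪ N.E,
      (P.Indep I ↔ M.Indep (I ∩ M.E) ∧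
        ((I ∩ N.E).ncard : ℤ) - (N.rk (I ∩ N.E) : ℤ) ≤
          (M.rk M.E : ℤ) - ((I ∩ M.E).ncard : ℤ)) := by
  intro I hIE
  have : P.Finite := ⟨hPE ▸ M.ground_finite.union N.ground_finite⟩
  refine ⟨fun hI => ?_, fun ⟨hA, hν⟩ =>
    Matroid.freeProduct_indep_of_nullity_le hdisj hZ hr1 hr2 hr3 (hPE ▸ hIE) hA hν⟩
  have hA := Matroid.freeProduct_indep_inter_ground hr1 hr2 hr3 hI
  exact ⟨hA, Matroid.freeProduct_nullity_le hdisj hr3 hI (hA.ncard_le_rk Set.inter_subset_right)⟩
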